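/- Let (Ω, F, P) be a probability space, H a real separable Hilbert space, G ⊆ F a sub-σ-algebra, m a positive integer, and Δ > 0. Let ΔW¹, …, ΔWᵐ : Ω → ℝ be mutually independent, each with the centered Gaussian law of variance Δ, and suppose the σ-algebra generated by (ΔW¹, …, ΔWᵐ) is independent of G. Let Y, X₁, …, Xₘ : Ω → H be G-measurable with E‖Y‖² < ∞ and E‖X_j‖² < ∞ for each j. Then for every fixed i ∈ {1,…,m}: E( ‖ Y·Δ − Σ_{j=1}^m X_j · ΔWⁱ ΔWʲ ‖² ) ≤ 3 (m+1) Δ² ( E‖Y‖² + Σ_{j=1}^m E‖X_j‖² ). In particular this quantity is O(Δ²). -/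

import Mathlib

open MeasureTheory ProbabilityTheory Real Set

open scoped ENNReal NNReal

lemma gauss_even_moment {b : ℝ} (hb : 0 < b) (n : ℕ) (hn : Even n) :
    ∫ x : ℝ, x ^ n * Real.exp (-b * x ^ 2)
      = b ^ (-((n : ℝ) + 1) / 2) * Real.Gamma (((n : ℝ) + 1) / 2) := by
  have h1 : (∫ x : ℝ, x ^ n * Real.exp (-b * x ^ 2))
      = ∫ x : ℝ, (fun t : ℝ => t ^ n * Real.exp (-b * t ^ 2)) |x| := by
    congr 1 with x
    simp [hn.pow_abs, sq_abs]
  rw [h1]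
  rw [integral_comp_abs (f := fun t : ℝ => t ^ n * Real.exp (-b * t ^ 2))]
  have h2 : (∫ t in Ioi (0:ℝ), t ^ n * Real.exp (-b * t ^ 2))
      = ∫ t in Ioi (0:ℝ), t ^ (n : ℝ) * Real.exp (-b * t ^ (2:ℝ)) := by
    congr 1 with t
    rw [Real.rpow_natCast, show ((2:ℝ)) = ((2:ℕ):ℝ) by norm_num, Real.rpow_natCast]
  rw [h2, integral_rpow_mul_exp_neg_mul_rpow two_pos (by exact_mod_cast neg_one_lt_zero.trans_le (Nat.cast_nonneg n)) hb]
  ring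

lemma gaussianReal_integral_fun (Δ : NNReal) (hΔ : Δ ≠ 0) (g : ℝ → ℝ) :
    ∫ x, g x ∂(gaussianReal 0 Δ) = ∫ x, gaussianPDFReal 0 Δ x * g x := by
  rw [gaussianReal_of_var_ne_zero 0 hΔ]
  have h : (gaussianPDF 0 Δ) = fun x => ((gaussianPDFReal 0 Δ x).toNNReal : ℝ≥0∞) := rfl
  rw [h, integral_withDensity_eq_integral_smul
    ((measurable_gaussianPDFReal 0 Δ).real_toNNReal) g]
  congr 1 with x
  rw [NNReal.smul_def, Real.coe_toNNReal _ (gaussianPDFReal_nonneg 0 Δ x), smul_eq_mul]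

lemma gaussianReal_integrable_pow (Δ : NNReal) (hΔ : Δ ≠ 0) (n : ℕ) :
    Integrable (fun x : ℝ => x ^ n) (gaussianReal 0 Δ) := by
  have hΔ' : 0 < (Δ : ℝ) := by positivity
  rw [gaussianReal_of_var_ne_zero 0 hΔ]
  have h : (gaussianPDF 0 Δ) = fun x => ((gaussianPDFReal 0 Δ x).toNNReal : ℝ≥0∞) := rfl
  rw [h]
  refine (integrable_withDensity_iff_integrable_smul (E := ℝ) (g := fun x : ℝ => x ^ n)
    ((measurable_gaussianPDFReal 0 Δ).real_toNNReal)).mpr ?_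
  have : (fun x : ℝ => (gaussianPDFReal 0 Δ x).toNNReal • x ^ n)
      = fun x : ℝ => (Real.sqrt (2 * π * Δ))⁻¹ * (x ^ (n:ℝ) * Real.exp (-(2*(Δ:ℝ))⁻¹ * x ^ 2)) := by
    funext x
    rw [NNReal.smul_def, Real.coe_toNNReal _ (gaussianPDFReal_nonneg 0 Δ x), smul_eq_mul,
      gaussianPDFReal, Real.rpow_natCast]
    rw [show -(x - 0)^2/(2*(Δ:ℝ)) = -(2*(Δ:ℝ))⁻¹ * x^2 by field_simp; ring]
    ring
  rw [this]
  exact (integrable_rpow_mul_exp_neg_mul_sq (by positivity)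
    (by exact_mod_cast neg_one_lt_zero.trans_le (Nat.cast_nonneg n))).const_mul _

lemma gauss_aux (Δ : NNReal) (hΔ : Δ ≠ 0) (n : ℕ) (hn : Even n) :
    ∫ x, x ^ n ∂(gaussianReal 0 Δ)
      = (Real.sqrt (2*π*Δ))⁻¹ * ((2*(Δ:ℝ)) ^ (((n:ℝ)+1)/2) * Real.Gamma (((n:ℝ)+1)/2)) := by
  have hΔ' : 0 < (Δ:ℝ) := by positivity
  rw [gaussianReal_integral_fun Δ hΔ]
  have h1 : ∀ x : ℝ, gaussianPDFReal 0 Δ x * x ^ n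
      = (Real.sqrt (2*π*Δ))⁻¹ * (x ^ n * Real.exp (-(2*(Δ:ℝ))⁻¹ * x ^ 2)) := by
    intro x
    rw [gaussianPDFReal, show -(x - 0)^2/(2*(Δ:ℝ)) = -(2*(Δ:ℝ))⁻¹ * x^2 by field_simp; ring]
    ring
  simp_rw [h1]
  rw [integral_const_mul, gauss_even_moment (by positivity) n hn]
  have h2 : ((2*(Δ:ℝ))⁻¹) ^ (-((n:ℝ)+1)/2) = (2*(Δ:ℝ)) ^ (((n:ℝ)+1)/2) := by
    rw [neg_div, Real.rpow_neg (by positivity), Real.inv_rpow (by positivity), inv_inv]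
  rw [h2]

lemma gaussianReal_moment_two (Δ : NNReal) (hΔ : Δ ≠ 0) :
    ∫ x, x ^ 2 ∂(gaussianReal 0 Δ) = Δ := by
  have hΔ' : 0 < (Δ:ℝ) := by positivity
  rw [gauss_aux Δ hΔ 2 (by norm_num), show ((2:ℕ):ℝ) + 1 = 3 by norm_num]
  have hΓ : Real.Gamma (3/2 : ℝ) = Real.sqrt π / 2 := by
    rw [show (3/2:ℝ) = 1/2 + 1 by norm_num, Real.Gamma_add_one (by norm_num),
      Real.Gamma_one_half_eq]; ring
  have h2 : ((2*(Δ:ℝ))) ^ ((3:ℝ)/2) = (2*(Δ:ℝ)) * Real.sqrt (2*(Δ:ℝ)) := by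
    rw [Real.sqrt_eq_rpow, show (3:ℝ)/2 = 1 + 1/2 by norm_num,
      Real.rpow_add (by positivity), Real.rpow_one]
  rw [hΓ, h2, show 2*π*(Δ:ℝ) = (2*(Δ:ℝ))*π by ring, Real.sqrt_mul (by positivity)]
  have hs : 0 < Real.sqrt (2*(Δ:ℝ)) := Real.sqrt_pos.mpr (by positivity)
  have hp : 0 < Real.sqrt π := Real.sqrt_pos.mpr Real.pi_pos
  rw [show (2*(Δ:ℝ)) = Real.sqrt (2*(Δ:ℝ)) * Real.sqrt (2*(Δ:ℝ)) by
    rw [Real.mul_self_sqrt (by positivity)]]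
  have h2a : Real.sqrt 2 * Real.sqrt 2 = 2 := Real.mul_self_sqrt (by norm_num)
  have hΔa : Real.sqrt (Δ:ℝ) * Real.sqrt (Δ:ℝ) = (Δ:ℝ) := Real.mul_self_sqrt hΔ'.le
  have hsq : Real.sqrt (2*(Δ:ℝ)) ^ 2 = 2*(Δ:ℝ) := Real.sq_sqrt (by positivity)
  field_simp
  linear_combination (Real.sqrt 2 * Real.sqrt (Δ:ℝ) * Real.sqrt (Δ:ℝ) * Real.sqrt (Δ:ℝ)
      * Real.sqrt π) * h2a
    + (2 * Real.sqrt 2 * Real.sqrt (Δ:ℝ) * Real.sqrt π) * hΔa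
    + hsq - (Real.sqrt 2 * Real.sqrt (Δ:ℝ) * Real.sqrt π * Real.sqrt (Δ:ℝ) * Real.sqrt (Δ:ℝ)) * h2a
    - (2 * Real.sqrt 2 * Real.sqrt (Δ:ℝ) * Real.sqrt π) * hΔa

lemma gaussianReal_moment_four (Δ : NNReal) (hΔ : Δ ≠ 0) :
    ∫ x, x ^ 4 ∂(gaussianReal 0 Δ) = 3 * (Δ:ℝ) ^ 2 := by
  have hΔ' : 0 < (Δ:ℝ) := by positivity
  rw [gauss_aux Δ hΔ 4 ⟨2, rfl⟩, show ((4:ℕ):ℝ) + 1 = 5 by norm_num]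
  have hΓ : Real.Gamma (5/2 : ℝ) = 3/4 * Real.sqrt π := by
    rw [show (5/2:ℝ) = 3/2 + 1 by norm_num, Real.Gamma_add_one (by norm_num),
      show (3/2:ℝ) = 1/2 + 1 by norm_num, Real.Gamma_add_one (by norm_num),
      Real.Gamma_one_half_eq]; ring
  have h2 : ((2*(Δ:ℝ))) ^ ((5:ℝ)/2) = (2*(Δ:ℝ))^2 * Real.sqrt (2*(Δ:ℝ)) := by
    rw [Real.sqrt_eq_rpow, show (5:ℝ)/2 = ((2:ℕ):ℝ) + 1/2 by norm_num,
      Real.rpow_add (by positivity), Real.rpow_natCast]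
  rw [hΓ, h2, show 2*π*(Δ:ℝ) = (2*(Δ:ℝ))*π by ring, Real.sqrt_mul (by positivity)]
  have hs : 0 < Real.sqrt (2*(Δ:ℝ)) := Real.sqrt_pos.mpr (by positivity)
  have hp : 0 < Real.sqrt π := Real.sqrt_pos.mpr Real.pi_pos
  rw [show ((2*(Δ:ℝ)))^2 = (2*(Δ:ℝ)) * (Real.sqrt (2*(Δ:ℝ)) * Real.sqrt (2*(Δ:ℝ))) by
    rw [Real.mul_self_sqrt (by positivity)]; ring]
  have h2a : Real.sqrt 2 * Real.sqrt 2 = 2 := Real.mul_self_sqrt (by norm_num)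
  have hΔa : Real.sqrt (Δ:ℝ) * Real.sqrt (Δ:ℝ) = (Δ:ℝ) := Real.mul_self_sqrt hΔ'.le
  have hsq : Real.sqrt (2*(Δ:ℝ)) ^ 2 = 2*(Δ:ℝ) := Real.sq_sqrt (by positivity)
  field_simp
  linear_combination (6 * (Δ:ℝ) * Real.sqrt 2 * Real.sqrt (Δ:ℝ) * Real.sqrt (Δ:ℝ)
      * Real.sqrt (Δ:ℝ) * Real.sqrt π) * h2a
    + (12 * (Δ:ℝ) * Real.sqrt 2 * Real.sqrt (Δ:ℝ) * Real.sqrt π) * hΔa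
    + 2 * hsq - (6 * (Δ:ℝ) * Real.sqrt 2 * Real.sqrt (Δ:ℝ) * Real.sqrt π * Real.sqrt (Δ:ℝ)
      * Real.sqrt (Δ:ℝ)) * h2a
    - (12 * (Δ:ℝ) * Real.sqrt 2 * Real.sqrt (Δ:ℝ) * Real.sqrt π) * hΔa

/-- If `ΔW¹,…,ΔWᵐ` are mutually independent centered Gaussians of
variance `Δ`, with `σ(ΔW¹,…,ΔWᵐ)` independent of the sub-σ-algebra `G`, and
`Y, X₁,…,Xₘ : Ω → H` are `G`-measurable with finite second moments, then for each
fixed `i`,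
`E(‖Y·Δ − Σ_j X_j·ΔWⁱΔWʲ‖²) ≤ 3(m+1)Δ²(E‖Y‖² + Σ_j E‖X_j‖²)`. -/
theorem stmt_6
    {Ω : Type*} (G : MeasurableSpace Ω) [F : MeasurableSpace Ω] (P : Measure Ω) [IsProbabilityMeasure P]
    {H : Type*} [NormedAddCommGroup H] [InnerProductSpace ℝ H]
    [SecondCountableTopology H] [CompleteSpace H]
    (hG : G ≤ F)
    (m : ℕ) (hm : 0 < m)
    (Δ : NNReal) (hΔ : 0 < Δ)
    (ΔW : Fin m → Ω → ℝ)
    (hWmeas : ∀ i, Measurable (ΔW i))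
    (hWindep : iIndepFun (_mΩ := F) (m := fun _ => Real.measurableSpace) ΔW P)
    (hWlaw : ∀ i, @Measure.map Ω ℝ F Real.measurableSpace (ΔW i) P = gaussianReal 0 Δ)
    (hWG : Indep (_mΩ := F)
      (MeasurableSpace.comap (fun ω i => ΔW i ω) MeasurableSpace.pi) G P)
    (Y : Ω → H) (X : Fin m → Ω → H)
    (hYmeas : StronglyMeasurable[G] Y)
    (hXmeas : ∀ j, StronglyMeasurable[G] (X j))
    (hYint : Integrable (fun ω => ‖Y ω‖ ^ 2) P)
    (hXint : ∀ j, Integrable (fun ω => ‖X j ω‖ ^ 2) P)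
    (i : Fin m) :
    ∫ ω, ‖(Δ : ℝ) • Y ω - ∑ j : Fin m, (ΔW i ω * ΔW j ω) • X j ω‖ ^ 2 ∂P
      ≤ 3 * ((m : ℝ) + 1) * (Δ : ℝ) ^ 2 *
        ((∫ ω, ‖Y ω‖ ^ 2 ∂P) + ∑ j : Fin m, ∫ ω, ‖X j ω‖ ^ 2 ∂P) := by
  classical
  have hΔne : Δ ≠ 0 := hΔ.ne'
  have hΔ' : 0 < (Δ : ℝ) := hΔ
  -- second and fourth moments of the increments
  have hWm : ∀ j, @Measurable Ω ℝ F Real.measurableSpace (ΔW j) :=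
    fun j => hWmeas j
  have hpow2 : Measurable (fun x : ℝ => x ^ 2) := measurable_id.pow_const 2
  have hpow4 : Measurable (fun x : ℝ => x ^ 4) := measurable_id.pow_const 4
  have hW2int : ∀ j, Integrable (fun ω => (ΔW j ω) ^ 2) P := by
    intro j
    have h := (integrable_map_measure (μ := P) (f := ΔW j) (g := fun x : ℝ => x ^ 2)
      hpow2.aestronglyMeasurable (Measurable.aemeasurable (μ := P) (hWm j))).mp
      (by rw [hWlaw j]; exact gaussianReal_integrable_pow Δ hΔne 2)
    exact h
  have hW4int : ∀ j, Integrable (fun ω => (ΔW j ω) ^ 4) P := by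
    intro j
    have h := (integrable_map_measure (μ := P) (f := ΔW j) (g := fun x : ℝ => x ^ 4)
      hpow4.aestronglyMeasurable (Measurable.aemeasurable (μ := P) (hWm j))).mp
      (by rw [hWlaw j]; exact gaussianReal_integrable_pow Δ hΔne 4)
    exact h
  have hW2 : ∀ j, ∫ ω, (ΔW j ω) ^ 2 ∂P = (Δ : ℝ) := by
    intro j
    have h := integral_map (μ := P) (φ := ΔW j) (f := fun x : ℝ => x ^ 2)
      (Measurable.aemeasurable (μ := P) (hWm j)) hpow2.aestronglyMeasurable
    rw [hWlaw j, gaussianReal_moment_two Δ hΔne] at h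
    exact h.symm
  have hW4 : ∀ j, ∫ ω, (ΔW j ω) ^ 4 ∂P = 3 * (Δ : ℝ) ^ 2 := by
    intro j
    have h := integral_map (μ := P) (φ := ΔW j) (f := fun x : ℝ => x ^ 4)
      (Measurable.aemeasurable (μ := P) (hWm j)) hpow4.aestronglyMeasurable
    rw [hWlaw j, gaussianReal_moment_four Δ hΔne] at h
    exact h.symm
  -- the squared product terms
  have hSint : ∀ j, Integrable (fun ω => (ΔW i ω * ΔW j ω) ^ 2) P := by
    intro j
    by_cases hij : j = i
    · subst hij
      have he : (fun ω => (ΔW j ω * ΔW j ω) ^ 2) = fun ω => (ΔW j ω) ^ 4 := by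
        funext ω; ring
      rw [he]; exact hW4int j
    · have hInd : IndepFun (ΔW i) (ΔW j) P := hWindep.indepFun (fun h => hij h.symm)
      have hInd2 : IndepFun (fun ω => (ΔW i ω) ^ 2) (fun ω => (ΔW j ω) ^ 2) P :=
        hInd.comp hpow2 hpow2
      have := hInd2.integrable_mul (hW2int i) (hW2int j)
      simpa [Pi.mul_def, mul_pow] using this
  have hSval : ∀ j, ∫ ω, (ΔW i ω * ΔW j ω) ^ 2 ∂P ≤ 3 * (Δ : ℝ) ^ 2 := by
    intro j
    by_cases hij : j = i
    · subst hij
      have he : (∫ ω, (ΔW j ω * ΔW j ω) ^ 2 ∂P) = ∫ ω, (ΔW j ω) ^ 4 ∂P := by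
        congr 1 with ω; ring
      rw [he, hW4 j]
    · have hInd : IndepFun (ΔW i) (ΔW j) P := hWindep.indepFun (fun h => hij h.symm)
      have hInd2 : IndepFun (fun ω => (ΔW i ω) ^ 2) (fun ω => (ΔW j ω) ^ 2) P :=
        hInd.comp hpow2 hpow2
      have h := hInd2.integral_mul_eq_mul_integral (hW2int i).aestronglyMeasurable (hW2int j).aestronglyMeasurable
      have h2 : ∫ ω, (ΔW i ω * ΔW j ω) ^ 2 ∂P = ∫ ω, (ΔW i ω) ^ 2 * (ΔW j ω) ^ 2 ∂P := by
        congr 1 with ω; ring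
      rw [h2]
      have h' : ∫ ω, ΔW i ω ^ 2 * ΔW j ω ^ 2 ∂P
          = (∫ ω, ΔW i ω ^ 2 ∂P) * ∫ ω, ΔW j ω ^ 2 ∂P := h
      rw [h', hW2 i, hW2 j]
      nlinarith [sq_nonneg (Δ : ℝ)]
  -- independence of the squared products from the G-measurable data
  have hSG : ∀ j, IndepFun (fun ω => (ΔW i ω * ΔW j ω) ^ 2) (fun ω => ‖X j ω‖ ^ 2) P := by
    intro j
    have hφ : Measurable (fun v : Fin m → ℝ => (v i * v j) ^ 2) :=
      ((measurable_pi_apply i).mul (measurable_pi_apply j)).pow_const 2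
    have h1 : MeasurableSpace.comap (fun ω => (ΔW i ω * ΔW j ω) ^ 2) Real.measurableSpace
        ≤ MeasurableSpace.comap (fun ω k => ΔW k ω) MeasurableSpace.pi := by
      have : (fun ω => (ΔW i ω * ΔW j ω) ^ 2)
          = (fun v : Fin m → ℝ => (v i * v j) ^ 2) ∘ (fun ω k => ΔW k ω) := rfl
      rw [this, ← MeasurableSpace.comap_comp]
      exact MeasurableSpace.comap_mono hφ.comap_le
    have h2 : MeasurableSpace.comap (fun ω => ‖X j ω‖ ^ 2) Real.measurableSpace ≤ G :=
      Measurable.comap_le (((hXmeas j).norm.measurable).pow_const 2)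
    exact indep_of_indep_of_le_left (indep_of_indep_of_le_right hWG h2) h1
  have hprod_int : ∀ j, Integrable (fun ω => (ΔW i ω * ΔW j ω) ^ 2 * ‖X j ω‖ ^ 2) P := by
    intro j
    exact (hSG j).integrable_mul (hSint j) (hXint j)
  have hprod_val : ∀ j, ∫ ω, (ΔW i ω * ΔW j ω) ^ 2 * ‖X j ω‖ ^ 2 ∂P
      = (∫ ω, (ΔW i ω * ΔW j ω) ^ 2 ∂P) * ∫ ω, ‖X j ω‖ ^ 2 ∂P := by
    intro j
    simpa [Pi.mul_apply] using (hSG j).integral_mul_eq_mul_integral (hSint j).aestronglyMeasurable (hXint j).aestronglyMeasurable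
  -- pointwise bound
  have hpt : ∀ ω, ‖(Δ : ℝ) • Y ω - ∑ j : Fin m, (ΔW i ω * ΔW j ω) • X j ω‖ ^ 2
      ≤ ((m : ℝ) + 1) *
        ((Δ : ℝ) ^ 2 * ‖Y ω‖ ^ 2 + ∑ j : Fin m, (ΔW i ω * ΔW j ω) ^ 2 * ‖X j ω‖ ^ 2) := by
    intro ω
    set f : Option (Fin m) → ℝ := fun o =>
      o.elim ‖(Δ : ℝ) • Y ω‖ (fun j => ‖(ΔW i ω * ΔW j ω) • X j ω‖) with hf
    have h0 : ‖(Δ : ℝ) • Y ω - ∑ j : Fin m, (ΔW i ω * ΔW j ω) • X j ω‖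
        ≤ ∑ o : Option (Fin m), f o := by
      rw [Fintype.sum_option]
      exact (norm_sub_le _ _).trans (add_le_add_right (norm_sum_le _ _) _)
    have h1 : ‖(Δ : ℝ) • Y ω - ∑ j : Fin m, (ΔW i ω * ΔW j ω) • X j ω‖ ^ 2
        ≤ (∑ o : Option (Fin m), f o) ^ 2 :=
      pow_le_pow_left₀ (norm_nonneg _) h0 2
    have h2 : (∑ o : Option (Fin m), f o) ^ 2
        ≤ ((m : ℝ) + 1) * ∑ o : Option (Fin m), f o ^ 2 := by
      have := sq_sum_le_card_mul_sum_sq (s := (Finset.univ : Finset (Option (Fin m)))) (f := f)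
      simpa [Fintype.card_option] using this
    refine h1.trans (h2.trans (le_of_eq ?_))
    congr 1
    rw [Fintype.sum_option]
    congr 1
    · simp [hf, norm_smul, mul_pow, sq_abs]
    · refine Finset.sum_congr rfl fun j _ => ?_
      simp [hf, norm_smul, mul_pow, sq_abs]
  -- integrate
  have hsum_int : Integrable
      (fun ω => ∑ j : Fin m, (ΔW i ω * ΔW j ω) ^ 2 * ‖X j ω‖ ^ 2) P :=
    integrable_finset_sum _ fun j _ => hprod_int j
  have hgint : Integrable (fun ω => ((m : ℝ) + 1) *
      ((Δ : ℝ) ^ 2 * ‖Y ω‖ ^ 2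
        + ∑ j : Fin m, (ΔW i ω * ΔW j ω) ^ 2 * ‖X j ω‖ ^ 2)) P :=
    ((hYint.const_mul _).add hsum_int).const_mul _
  have hEY : 0 ≤ ∫ ω, ‖Y ω‖ ^ 2 ∂P := integral_nonneg fun ω => by positivity
  have hEX : ∀ j, 0 ≤ ∫ ω, ‖X j ω‖ ^ 2 ∂P := fun j => integral_nonneg fun ω => by positivity
  calc ∫ ω, ‖(Δ : ℝ) • Y ω - ∑ j : Fin m, (ΔW i ω * ΔW j ω) • X j ω‖ ^ 2 ∂P
      ≤ ∫ ω, ((m : ℝ) + 1) * ((Δ : ℝ) ^ 2 * ‖Y ω‖ ^ 2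
          + ∑ j : Fin m, (ΔW i ω * ΔW j ω) ^ 2 * ‖X j ω‖ ^ 2) ∂P :=
        integral_mono_of_nonneg (Filter.Eventually.of_forall fun ω => by positivity)
          hgint (Filter.Eventually.of_forall hpt)
    _ = ((m : ℝ) + 1) * ((Δ : ℝ) ^ 2 * (∫ ω, ‖Y ω‖ ^ 2 ∂P)
          + ∑ j : Fin m, (∫ ω, (ΔW i ω * ΔW j ω) ^ 2 ∂P) * ∫ ω, ‖X j ω‖ ^ 2 ∂P) := by
        rw [integral_const_mul, integral_add (hYint.const_mul _) hsum_int,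
          integral_const_mul, integral_finset_sum _ fun j _ => hprod_int j]
        simp_rw [hprod_val]
    _ ≤ ((m : ℝ) + 1) * ((Δ : ℝ) ^ 2 * (∫ ω, ‖Y ω‖ ^ 2 ∂P)
          + ∑ j : Fin m, 3 * (Δ : ℝ) ^ 2 * ∫ ω, ‖X j ω‖ ^ 2 ∂P) := by
        refine mul_le_mul_of_nonneg_left (add_le_add_right
          (Finset.sum_le_sum fun j _ => mul_le_mul_of_nonneg_right (hSval j) (hEX j)) _)
          (by positivity)
    _ ≤ 3 * ((m : ℝ) + 1) * (Δ : ℝ) ^ 2 *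
        ((∫ ω, ‖Y ω‖ ^ 2 ∂P) + ∑ j : Fin m, ∫ ω, ‖X j ω‖ ^ 2 ∂P) := by
        rw [← Finset.mul_sum]
        have hm1 : (0 : ℝ) ≤ (m : ℝ) + 1 := by positivity
        nlinarith [mul_nonneg (mul_nonneg hm1 (sq_nonneg (Δ : ℝ))) hEY]
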